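/- arXiv:2205.00866 — 4 statements merged into one kernel-verified Lean document; each statement's English description precedes it below -/
import Mathlib

section
/- Let (q_j)_{j≥0} be the integer sequence defined by q_0 = 1, q_1 = 4, and for j ≥ 2, q_j = 4q_{j-1} − q_{j-2} if j ≡ 0 or 1 (mod 4), and q_j = 2q_{j-1} − q_{j-2} if j ≡ 2 or 3 (mod 4). Let μ = 15 + 4√14 and ν = 15 − 4√14. Then for all j ≥ 0: if j ≡ 0 (mod 4), q_j = (1/2 + 9√14/56)μ^{j/4} + (1/2 − 9√14/56)ν^{j/4}; if j ≡ 1 (mod 4), q_j = (2 + 31√14/56)μ^{(j−1)/4} + (2 − 31√14/56)ν^{(j−1)/4}; if j ≡ 2 (mod 4), q_j = (7/2 + 53√14/56)μ^{(j−2)/4} + (7/2 − 53√14/56)ν^{(j−2)/4}; if j ≡ 3 (mod 4), q_j = (5 + 75√14/56)μ^{(j−3)/4} + (5 − 75√14/56)ν^{(j−3)/4}. -/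
noncomputable def mu : ℝ := 15 + 4 * Real.sqrt 14
noncomputable def nu : ℝ := 15 - 4 * Real.sqrt 14

theorem stmt_0 (q : ℕ → ℤ)
    (h0 : q 0 = 1) (h1 : q 1 = 4)
    (hrec41 : ∀ j, 2 ≤ j → j % 4 = 0 ∨ j % 4 = 1 → q j = 4 * q (j - 1) - q (j - 2))
    (hrec23 : ∀ j, 2 ≤ j → j % 4 = 2 ∨ j % 4 = 3 → q j = 2 * q (j - 1) - q (j - 2)) :
    ∀ j : ℕ,
      (j % 4 = 0 → (q j : ℝ) =
        (1 / 2 + 9 * Real.sqrt 14 / 56) * mu ^ (j / 4)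
          + (1 / 2 - 9 * Real.sqrt 14 / 56) * nu ^ (j / 4)) ∧
      (j % 4 = 1 → (q j : ℝ) =
        (2 + 31 * Real.sqrt 14 / 56) * mu ^ ((j - 1) / 4)
          + (2 - 31 * Real.sqrt 14 / 56) * nu ^ ((j - 1) / 4)) ∧
      (j % 4 = 2 → (q j : ℝ) =
        (7 / 2 + 53 * Real.sqrt 14 / 56) * mu ^ ((j - 2) / 4)
          + (7 / 2 - 53 * Real.sqrt 14 / 56) * nu ^ ((j - 2) / 4)) ∧
      (j % 4 = 3 → (q j : ℝ) =
        (5 + 75 * Real.sqrt 14 / 56) * mu ^ ((j - 3) / 4)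
          + (5 - 75 * Real.sqrt 14 / 56) * nu ^ ((j - 3) / 4)) := by
  set s : ℝ := Real.sqrt 14 with hs
  have hs2 : s ^ 2 = 14 := Real.sq_sqrt (by norm_num)
  -- small values
  have hq2 : q 2 = 7 := by
    have := hrec23 2 (by norm_num) (by norm_num)
    simpa [h0, h1] using this
  have hq3 : q 3 = 10 := by
    have := hrec23 3 (by norm_num) (by norm_num)
    simpa [h1, hq2] using this
  have key : ∀ k : ℕ,
      ((q (4*k) : ℝ) = (1 / 2 + 9 * s / 56) * mu ^ k + (1 / 2 - 9 * s / 56) * nu ^ k) ∧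
      ((q (4*k+1) : ℝ) = (2 + 31 * s / 56) * mu ^ k + (2 - 31 * s / 56) * nu ^ k) ∧
      ((q (4*k+2) : ℝ) = (7 / 2 + 53 * s / 56) * mu ^ k + (7 / 2 - 53 * s / 56) * nu ^ k) ∧
      ((q (4*k+3) : ℝ) = (5 + 75 * s / 56) * mu ^ k + (5 - 75 * s / 56) * nu ^ k) := by
    intro k
    induction k with
    | zero =>
      refine ⟨?_, ?_, ?_, ?_⟩ <;>
        simp only [Nat.mul_zero, Nat.zero_add, h0, h1, hq2, hq3, pow_zero] <;>
        push_cast <;> ring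
    | succ k ih =>
      obtain ⟨i0, i1, i2, i3⟩ := ih
      have e0 : (q (4*(k+1)) : ℝ) =
          (1 / 2 + 9 * s / 56) * mu ^ (k+1) + (1 / 2 - 9 * s / 56) * nu ^ (k+1) := by
        have hr := hrec41 (4*k+4) (by omega) (by omega)
        have d1 : 4*k+4-1 = 4*k+3 := by omega
        have d2 : 4*k+4-2 = 4*k+2 := by omega
        rw [d1, d2] at hr
        have e : 4*(k+1) = 4*k+4 := by ring
        rw [e, hr]; push_cast
        rw [i2, i3, pow_succ, pow_succ]
        simp only [mu, nu, ← hs]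
        linear_combination (-(9:ℝ)/14 * ((15+4*s)^k + (15-4*s)^k)) * hs2
      have e1 : (q (4*(k+1)+1) : ℝ) =
          (2 + 31 * s / 56) * mu ^ (k+1) + (2 - 31 * s / 56) * nu ^ (k+1) := by
        have hr := hrec41 (4*k+5) (by omega) (by omega)
        have d1 : 4*k+5-1 = 4*(k+1) := by omega
        have d2 : 4*k+5-2 = 4*k+3 := by omega
        rw [d1, d2] at hr
        have e : 4*(k+1)+1 = 4*k+5 := by ring
        rw [e, hr]; push_cast
        rw [e0, i3, pow_succ, pow_succ]
        simp only [mu, nu, ← hs]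
        linear_combination ((5:ℝ)/14 * ((15+4*s)^k + (15-4*s)^k)) * hs2
      have e2 : (q (4*(k+1)+2) : ℝ) =
          (7 / 2 + 53 * s / 56) * mu ^ (k+1) + (7 / 2 - 53 * s / 56) * nu ^ (k+1) := by
        have hr := hrec23 (4*k+6) (by omega) (by omega)
        have d1 : 4*k+6-1 = 4*(k+1)+1 := by omega
        have d2 : 4*k+6-2 = 4*(k+1) := by omega
        rw [d1, d2] at hr
        have e : 4*(k+1)+2 = 4*k+6 := by ring
        rw [e, hr]; push_cast
        rw [e0, e1]; ring
      have e3 : (q (4*(k+1)+3) : ℝ) =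
          (5 + 75 * s / 56) * mu ^ (k+1) + (5 - 75 * s / 56) * nu ^ (k+1) := by
        have hr := hrec23 (4*k+7) (by omega) (by omega)
        have d1 : 4*k+7-1 = 4*(k+1)+2 := by omega
        have d2 : 4*k+7-2 = 4*(k+1)+1 := by omega
        rw [d1, d2] at hr
        have e : 4*(k+1)+3 = 4*k+7 := by ring
        rw [e, hr]; push_cast
        rw [e1, e2]; ring
      exact ⟨e0, e1, e2, e3⟩
  intro j
  refine ⟨?_, ?_, ?_, ?_⟩ <;> intro hr
  · obtain ⟨k, rfl⟩ : ∃ k, j = 4*k := ⟨j/4, by omega⟩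
    have : 4*k/4 = k := by omega
    rw [this]; exact (key k).1
  · obtain ⟨k, rfl⟩ : ∃ k, j = 4*k+1 := ⟨j/4, by omega⟩
    have : (4*k+1-1)/4 = k := by omega
    rw [this]; exact (key k).2.1
  · obtain ⟨k, rfl⟩ : ∃ k, j = 4*k+2 := ⟨j/4, by omega⟩
    have : (4*k+2-2)/4 = k := by omega
    rw [this]; exact (key k).2.2.1
  · obtain ⟨k, rfl⟩ : ∃ k, j = 4*k+3 := ⟨j/4, by omega⟩
    have : (4*k+3-3)/4 = k := by omega
    rw [this]; exact (key k).2.2.2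
end

section
/- Let (q'_j)_{j≥0} be the integer sequence defined by q'_0 = 1, q'_1 = 2, and for j ≥ 2, q'_j = 4q'_{j-1} − q'_{j-2} if j ≡ 0 or 3 (mod 4), and q'_j = 2q'_{j-1} − q'_{j-2} if j ≡ 1 or 2 (mod 4). Let μ = 15 + 4√14 and ν = 15 − 4√14. Then for all j ≥ 0: if j ≡ 0 (mod 4), q'_j = (1/2 + 11√14/56)μ^{j/4} + (1/2 − 11√14/56)ν^{j/4}; if j ≡ 1 (mod 4), q'_j = (1 + 17√14/56)μ^{(j−1)/4} + (1 − 17√14/56)ν^{(j−1)/4}; if j ≡ 2 (mod 4), q'_j = (3/2 + 23√14/56)μ^{(j−2)/4} + (3/2 − 23√14/56)ν^{(j−2)/4}; if j ≡ 3 (mod 4), q'_j = (5 + 75√14/56)μ^{(j−3)/4} + (5 − 75√14/56)ν^{(j−3)/4}. -/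
theorem stmt_1 (q' : ℕ → ℤ)
    (h0 : q' 0 = 1) (h1 : q' 1 = 2)
    (hrec40 : ∀ j, 2 ≤ j → j % 4 = 0 ∨ j % 4 = 3 → q' j = 4 * q' (j - 1) - q' (j - 2))
    (hrec12 : ∀ j, 2 ≤ j → j % 4 = 1 ∨ j % 4 = 2 → q' j = 2 * q' (j - 1) - q' (j - 2)) :
    ∀ j : ℕ,
      (j % 4 = 0 → (q' j : ℝ) =
        (1 / 2 + 11 * Real.sqrt 14 / 56) * mu ^ (j / 4)
          + (1 / 2 - 11 * Real.sqrt 14 / 56) * nu ^ (j / 4)) ∧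
      (j % 4 = 1 → (q' j : ℝ) =
        (1 + 17 * Real.sqrt 14 / 56) * mu ^ ((j - 1) / 4)
          + (1 - 17 * Real.sqrt 14 / 56) * nu ^ ((j - 1) / 4)) ∧
      (j % 4 = 2 → (q' j : ℝ) =
        (3 / 2 + 23 * Real.sqrt 14 / 56) * mu ^ ((j - 2) / 4)
          + (3 / 2 - 23 * Real.sqrt 14 / 56) * nu ^ ((j - 2) / 4)) ∧
      (j % 4 = 3 → (q' j : ℝ) =
        (5 + 75 * Real.sqrt 14 / 56) * mu ^ ((j - 3) / 4)
          + (5 - 75 * Real.sqrt 14 / 56) * nu ^ ((j - 3) / 4)) := by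

  have h14 : Real.sqrt 14 ^ 2 = 14 := Real.sq_sqrt (by norm_num)
  set a := Real.sqrt 14 with ha
  have key : ∀ k : ℕ,
      ((q' (4 * k) : ℝ) = (1 / 2 + 11 * a / 56) * mu ^ k + (1 / 2 - 11 * a / 56) * nu ^ k) ∧
      ((q' (4 * k + 1) : ℝ) = (1 + 17 * a / 56) * mu ^ k + (1 - 17 * a / 56) * nu ^ k) ∧
      ((q' (4 * k + 2) : ℝ) = (3 / 2 + 23 * a / 56) * mu ^ k + (3 / 2 - 23 * a / 56) * nu ^ k) ∧
      ((q' (4 * k + 3) : ℝ) = (5 + 75 * a / 56) * mu ^ k + (5 - 75 * a / 56) * nu ^ k) := by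
    intro k
    induction k with
    | zero =>
      have e2 : q' 2 = 2 * q' 1 - q' 0 := by simpa using hrec12 2 (by norm_num) (Or.inr rfl)
      have e3 : q' 3 = 4 * q' 2 - q' 1 := by simpa using hrec40 3 (by norm_num) (Or.inr rfl)
      rw [e2, h0, h1] at e3
      rw [e2] at *
      refine ⟨?_, ?_, ?_, ?_⟩ <;>
        simp only [Nat.mul_zero, Nat.zero_add, pow_zero, h0, h1, e3] <;> push_cast <;> ring
    | succ k ih =>
      obtain ⟨i0, i1, i2, i3⟩ := ih
      have e4 : q' (4 * k + 4) = 4 * q' (4 * k + 3) - q' (4 * k + 2) := by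
        have := hrec40 (4 * k + 4) (by omega) (by omega)
        simpa using this
      have e5 : q' (4 * k + 5) = 2 * q' (4 * k + 4) - q' (4 * k + 3) := by
        have := hrec12 (4 * k + 5) (by omega) (by omega)
        simpa using this
      have e6 : q' (4 * k + 6) = 2 * q' (4 * k + 5) - q' (4 * k + 4) := by
        have := hrec12 (4 * k + 6) (by omega) (by omega)
        simpa using this
      have e7 : q' (4 * k + 7) = 4 * q' (4 * k + 6) - q' (4 * k + 5) := by
        have := hrec40 (4 * k + 7) (by omega) (by omega)
        simpa using this
      have p4 : (q' (4 * k + 4) : ℝ) =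
          (1 / 2 + 11 * a / 56) * mu ^ (k + 1) + (1 / 2 - 11 * a / 56) * nu ^ (k + 1) := by
        rw [e4]; push_cast; rw [i3, i2]
        simp only [mu, nu, pow_succ, ← ha]
        linear_combination (-(11 / 14) * ((15 + 4 * a) ^ k + (15 - 4 * a) ^ k)) * h14
      have p5 : (q' (4 * k + 5) : ℝ) =
          (1 + 17 * a / 56) * mu ^ (k + 1) + (1 - 17 * a / 56) * nu ^ (k + 1) := by
        rw [e5]; push_cast; rw [p4, i3]
        simp only [mu, nu, pow_succ, ← ha]
        linear_combination ((5 / 14) * ((15 + 4 * a) ^ k + (15 - 4 * a) ^ k)) * h14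
      have p6 : (q' (4 * k + 6) : ℝ) =
          (3 / 2 + 23 * a / 56) * mu ^ (k + 1) + (3 / 2 - 23 * a / 56) * nu ^ (k + 1) := by
        rw [e6]; push_cast; rw [p5, p4]; ring
      have p7 : (q' (4 * k + 7) : ℝ) =
          (5 + 75 * a / 56) * mu ^ (k + 1) + (5 - 75 * a / 56) * nu ^ (k + 1) := by
        rw [e7]; push_cast; rw [p6, p5]; ring
      have n0 : 4 * (k + 1) = 4 * k + 4 := by ring
      have n1 : 4 * (k + 1) + 1 = 4 * k + 5 := by ring
      have n2 : 4 * (k + 1) + 2 = 4 * k + 6 := by ring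
      have n3 : 4 * (k + 1) + 3 = 4 * k + 7 := by ring
      exact ⟨by rw [n0]; exact p4, by rw [n1]; exact p5, by rw [n2]; exact p6,
        by rw [n3]; exact p7⟩
  intro j
  refine ⟨fun hr => ?_, fun hr => ?_, fun hr => ?_, fun hr => ?_⟩
  · obtain ⟨k, rfl⟩ : ∃ k, j = 4 * k := ⟨j / 4, by omega⟩
    have : 4 * k / 4 = k := by omega
    rw [this]; exact (key k).1
  · obtain ⟨k, rfl⟩ : ∃ k, j = 4 * k + 1 := ⟨j / 4, by omega⟩
    have : (4 * k + 1 - 1) / 4 = k := by omega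
    rw [this]; exact (key k).2.1
  · obtain ⟨k, rfl⟩ : ∃ k, j = 4 * k + 2 := ⟨j / 4, by omega⟩
    have : (4 * k + 2 - 2) / 4 = k := by omega
    rw [this]; exact (key k).2.2.1
  · obtain ⟨k, rfl⟩ : ∃ k, j = 4 * k + 3 := ⟨j / 4, by omega⟩
    have : (4 * k + 3 - 3) / 4 = k := by omega
    rw [this]; exact (key k).2.2.2
end

section
/- Let n ≥ 1 and let L_S(n) be the 4n×4n real symmetric matrix with diagonal entries 4 at positions j ≡ 0 or 1 (mod 4) and 2 at positions j ≡ 2 or 3 (mod 4), entries −1 on the sub- and super-diagonal, corner entries (L_S)_{1,4n} = (L_S)_{4n,1} = +1, and all other entries 0. Let μ = 15 + 4√14 and ν = 15 − 4√14. Then det L_S(n) = μ^n + ν^n + 2. -/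
/-- The matrix `L_S(n)`: 4n×4n, diagonal entries 4 at (1-indexed) positions ≡ 0,1 (mod 4)
and 2 at positions ≡ 2,3 (mod 4), −1 on the sub/super-diagonal, +1 in the corners. -/
def LS (n : ℕ) : Matrix (Fin (4 * n)) (Fin (4 * n)) ℝ :=
  Matrix.of fun i j =>
    if i.val = j.val then
      (if (i.val + 1) % 4 = 0 ∨ (i.val + 1) % 4 = 1 then 4 else 2)
    else if i.val + 1 = j.val ∨ j.val + 1 = i.val then -1
    else if (i.val = 0 ∧ j.val = 4 * n - 1) ∨ (j.val = 0 ∧ i.val = 4 * n - 1) then 1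
    else 0

def fd : ℕ → ℝ := fun j => if (j+1) % 4 = 0 ∨ (j+1) % 4 = 1 then 4 else 2

def Pc (a : ℕ) : ℕ → ℝ
  | 0 => 1
  | 1 => fd a
  | (m+2) => fd (a+m+1) * Pc a (m+1) - Pc a m

lemma Pc_rec (a m : ℕ) : Pc a (m+2) = fd (a+m+1) * Pc a (m+1) - Pc a m := rfl

lemma fd_eq_four {j : ℕ} (h : j % 4 = 0 ∨ j % 4 = 3) : fd j = 4 := by
  unfold fd; rw [if_pos (by omega)]

lemma fd_eq_two {j : ℕ} (h : j % 4 = 1 ∨ j % 4 = 2) : fd j = 2 := by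
  unfold fd; rw [if_neg (by omega)]

lemma Pc_rec' (a m r s : ℕ) (h1 : m = r + 2) (h2 : s = r + 1) (v : ℝ)
    (hv : fd (a + r + 1) = v) : Pc a m = v * Pc a s - Pc a r := by
  subst h1; subst h2; rw [← hv]; exact Pc_rec a r

lemma stepA (k : ℕ) :
    Pc 0 (4*(k+1)+3) = 37 * Pc 0 (4*k+3) - 10 * Pc 0 (4*k+2) ∧
    Pc 0 (4*(k+1)+2) = 26 * Pc 0 (4*k+3) - 7 * Pc 0 (4*k+2) := by
  have e1 : Pc 0 (4*k+4) = 4 * Pc 0 (4*k+3) - Pc 0 (4*k+2) :=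
    Pc_rec' 0 (4*k+4) (4*k+2) (4*k+3) (by ring) (by ring) 4 (fd_eq_four (by omega))
  have e2 : Pc 0 (4*k+5) = 4 * Pc 0 (4*k+4) - Pc 0 (4*k+3) :=
    Pc_rec' 0 (4*k+5) (4*k+3) (4*k+4) (by ring) (by ring) 4 (fd_eq_four (by omega))
  have e3 : Pc 0 (4*k+6) = 2 * Pc 0 (4*k+5) - Pc 0 (4*k+4) :=
    Pc_rec' 0 (4*k+6) (4*k+4) (4*k+5) (by ring) (by ring) 2 (fd_eq_two (by omega))
  have e4 : Pc 0 (4*k+7) = 2 * Pc 0 (4*k+6) - Pc 0 (4*k+5) :=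
    Pc_rec' 0 (4*k+7) (4*k+5) (4*k+6) (by ring) (by ring) 2 (fd_eq_two (by omega))
  constructor
  · rw [show 4*(k+1)+3 = 4*k+7 by ring]; linarith
  · rw [show 4*(k+1)+2 = 4*k+6 by ring]; linarith

lemma stepC (k : ℕ) :
    Pc 1 (4*(k+1)+2) = 37 * Pc 1 (4*k+2) - 10 * Pc 1 (4*k+1) ∧
    Pc 1 (4*(k+1)+1) = 26 * Pc 1 (4*k+2) - 7 * Pc 1 (4*k+1) := by
  have e1 : Pc 1 (4*k+3) = 4 * Pc 1 (4*k+2) - Pc 1 (4*k+1) :=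
    Pc_rec' 1 (4*k+3) (4*k+1) (4*k+2) (by ring) (by ring) 4 (fd_eq_four (by omega))
  have e2 : Pc 1 (4*k+4) = 4 * Pc 1 (4*k+3) - Pc 1 (4*k+2) :=
    Pc_rec' 1 (4*k+4) (4*k+2) (4*k+3) (by ring) (by ring) 4 (fd_eq_four (by omega))
  have e3 : Pc 1 (4*k+5) = 2 * Pc 1 (4*k+4) - Pc 1 (4*k+3) :=
    Pc_rec' 1 (4*k+5) (4*k+3) (4*k+4) (by ring) (by ring) 2 (fd_eq_two (by omega))
  have e4 : Pc 1 (4*k+6) = 2 * Pc 1 (4*k+5) - Pc 1 (4*k+4) :=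
    Pc_rec' 1 (4*k+6) (4*k+4) (4*k+5) (by ring) (by ring) 2 (fd_eq_two (by omega))
  constructor
  · rw [show 4*(k+1)+2 = 4*k+6 by ring]; linarith
  · rw [show 4*(k+1)+1 = 4*k+5 by ring]; linarith

lemma A2 (k : ℕ) : Pc 0 (4*(k+2)+3) = 30 * Pc 0 (4*(k+1)+3) - Pc 0 (4*k+3) := by
  have h1 := stepA k
  have h2 := stepA (k+1)
  rw [show k+1+1 = k+2 by omega] at h2
  linarith [h1.1, h1.2, h2.1, h2.2]

lemma B2 (k : ℕ) : Pc 0 (4*(k+2)+2) = 30 * Pc 0 (4*(k+1)+2) - Pc 0 (4*k+2) := by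
  have h1 := stepA k
  have h2 := stepA (k+1)
  rw [show k+1+1 = k+2 by omega] at h2
  linarith [h1.1, h1.2, h2.1, h2.2]

lemma C2 (k : ℕ) : Pc 1 (4*(k+2)+2) = 30 * Pc 1 (4*(k+1)+2) - Pc 1 (4*k+2) := by
  have h1 := stepC k
  have h2 := stepC (k+1)
  rw [show k+1+1 = k+2 by omega] at h2
  linarith [h1.1, h1.2, h2.1, h2.2]

lemma Smain : ∀ k : ℕ,
    4 * Pc 0 (4*k+3) - Pc 0 (4*k+2) - Pc 1 (4*k+2) = mu^(k+1) + nu^(k+1) := by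
  have h14 : Real.sqrt 14 ^ 2 = 14 := Real.sq_sqrt (by norm_num)
  have hmu2 : mu^2 = 30*mu - 1 := by unfold mu; linear_combination 16*h14
  have hnu2 : nu^2 = 30*nu - 1 := by unfold nu; linear_combination 16*h14
  have hrec : ∀ (x:ℝ), x^2 = 30*x-1 → ∀ n:ℕ, x^(n+3) = 30*x^(n+2) - x^(n+1) := by
    intro x hx n
    have h1 : x^(n+3) = x^(n+1) * x^2 := by ring
    have h2 : x^(n+2) = x^(n+1) * x := by ring
    rw [h1, hx, h2]; ring
  have v03 : Pc 0 3 = 10 := by norm_num [Pc, fd]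
  have v02 : Pc 0 2 = 7 := by norm_num [Pc, fd]
  have v12 : Pc 1 2 = 3 := by norm_num [Pc, fd]
  have v07 : Pc 0 7 = 300 := by norm_num [Pc, fd]
  have v06 : Pc 0 6 = 211 := by norm_num [Pc, fd]
  have v16 : Pc 1 6 = 91 := by norm_num [Pc, fd]
  have hmn1 : mu + nu = 30 := by unfold mu nu; ring
  have hmn2 : mu^2 + nu^2 = 898 := by unfold mu nu; linear_combination 32*h14
  suffices H : ∀ k : ℕ,
      (4 * Pc 0 (4*k+3) - Pc 0 (4*k+2) - Pc 1 (4*k+2) = mu^(k+1) + nu^(k+1)) ∧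
      (4 * Pc 0 (4*(k+1)+3) - Pc 0 (4*(k+1)+2) - Pc 1 (4*(k+1)+2) = mu^(k+2) + nu^(k+2)) by
    exact fun k => (H k).1
  intro k
  induction k with
  | zero =>
    constructor
    · norm_num [v03, v02, v12]
      linarith
    · norm_num [v07, v06, v16]
      linarith
  | succ n ih =>
    refine ⟨ih.2, ?_⟩
    have hA := A2 n
    have hB := B2 n
    have hC := C2 n
    have hM := hrec mu hmu2 n
    have hN := hrec nu hnu2 n
    rw [show n+1+1 = n+2 by omega, show n+1+2 = n+3 by omega]
    linarith [ih.1, ih.2]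

def Tm (a m : ℕ) : Matrix (Fin m) (Fin m) ℝ :=
  Matrix.of fun i j => if i.val = j.val then fd (a + i.val)
    else if i.val + 1 = j.val ∨ j.val + 1 = i.val then -1 else 0

lemma detT : ∀ (m a : ℕ), (Tm a m).det = Pc a m := by
  intro m
  induction m using Nat.strong_induction_on with
  | _ m ih =>
    match m with
    | 0 => intro a; simp [Pc, Tm]
    | 1 => intro a; rw [Matrix.det_fin_one]; simp [Tm, Pc]
    | (m+2) =>
      intro a
      rw [Matrix.det_succ_row (Tm a (m+2)) (Fin.last (m+1))]
      have hne : (Fin.last m).castSucc ≠ Fin.last (m+1) := by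
        simp [Fin.ext_iff]
      have hz : ∀ x ∈ (Finset.univ : Finset (Fin (m+2))),
          x ∉ ({(Fin.last m).castSucc, Fin.last (m+1)} : Finset (Fin (m+2))) →
          (-1:ℝ)^((Fin.last (m+1) : ℕ) + (x:ℕ)) * Tm a (m+2) (Fin.last (m+1)) x *
            ((Tm a (m+2)).submatrix (Fin.last (m+1)).succAbove x.succAbove).det = 0 := by
        intro x _ hx
        simp only [Finset.mem_insert, Finset.mem_singleton, Fin.ext_iff,
          Fin.coe_castSucc, Fin.val_last, not_or] at hx
        have hxl := x.isLt
        have : Tm a (m+2) (Fin.last (m+1)) x = 0 := by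
          simp only [Tm, Matrix.of_apply, Fin.val_last]
          split_ifs <;> first | rfl | (exfalso; omega)
        rw [this, mul_zero, zero_mul]
      rw [← Finset.sum_subset (Finset.subset_univ _) hz, Finset.sum_pair hne]
      have Hll : ((Tm a (m+2)).submatrix (Fin.last (m+1)).succAbove
          (Fin.last (m+1)).succAbove).det = Pc a (m+1) := by
        rw [Fin.succAbove_last]
        have : (Tm a (m+2)).submatrix Fin.castSucc Fin.castSucc = Tm a (m+1) := by
          ext i j
          simp [Tm, Matrix.submatrix_apply]
        rw [this, ih (m+1) (by omega)]
      have Hjm : ((Tm a (m+2)).submatrix (Fin.last (m+1)).succAbove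
          ((Fin.last m).castSucc).succAbove).det = - Pc a m := by
        rw [Fin.succAbove_last]
        rw [Matrix.det_succ_column _ (Fin.last m)]
        rw [Finset.sum_eq_single (Fin.last m)]
        · have hent : (Tm a (m+2)).submatrix Fin.castSucc
              ((Fin.last m).castSucc).succAbove (Fin.last m) (Fin.last m) = -1 := by
            simp only [Matrix.submatrix_apply, Tm, Matrix.of_apply, Fin.succAbove,
              Fin.lt_def, Fin.coe_castSucc, Fin.val_last, apply_ite Fin.val, Fin.val_succ]
            split_ifs <;> first | rfl | (exfalso; omega)
          have hmin : (((Tm a (m+2)).submatrix Fin.castSucc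
              ((Fin.last m).castSucc).succAbove).submatrix
              (Fin.last m).succAbove (Fin.last m).succAbove).det = Pc a m := by
            rw [Fin.succAbove_last]
            have : ((Tm a (m+2)).submatrix Fin.castSucc
                ((Fin.last m).castSucc).succAbove).submatrix
                Fin.castSucc Fin.castSucc = Tm a m := by
              ext i j
              have hj : (j:ℕ) < m := j.isLt
              have hi : (i:ℕ) < m := i.isLt
              simp only [Matrix.submatrix_apply, Tm, Matrix.of_apply, Fin.succAbove,
                Fin.lt_def, Fin.coe_castSucc, Fin.val_last, apply_ite Fin.val, Fin.val_succ]
              split_ifs <;> first | rfl | (exfalso; omega)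
            rw [this, ih m (by omega)]
          rw [hent, hmin, Fin.val_last]
          have : (-1:ℝ)^(m + m) = 1 := Even.neg_one_pow ⟨m, by ring⟩
          rw [this]; ring
        · intro i _ hi
          have h1 : (i:ℕ) ≠ m := fun h => hi (Fin.ext (by rw [h, Fin.val_last]))
          have hil := i.isLt
          have : (Tm a (m+2)).submatrix Fin.castSucc
              ((Fin.last m).castSucc).succAbove i (Fin.last m) = 0 := by
            simp only [Matrix.submatrix_apply, Tm, Matrix.of_apply, Fin.succAbove,
              Fin.lt_def, Fin.coe_castSucc, Fin.val_last, apply_ite Fin.val, Fin.val_succ]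
            split_ifs <;> first | rfl | (exfalso; omega)
          rw [this, mul_zero, zero_mul]
        · intro h; exact absurd (Finset.mem_univ _) h
      rw [Hll, Hjm]
      have hT1 : Tm a (m+2) (Fin.last (m+1)) (Fin.last (m+1)) = fd (a + (m+1)) := by
        simp [Tm, Fin.val_last]
      have hT2 : Tm a (m+2) (Fin.last (m+1)) ((Fin.last m).castSucc) = -1 := by
        simp only [Tm, Matrix.of_apply, Fin.val_last, Fin.coe_castSucc, or_true, if_true]
        split_ifs <;> first | rfl | (exfalso; omega)
      rw [hT1, hT2, Fin.val_last, Fin.coe_castSucc, Fin.val_last]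
      have s1 : (-1:ℝ)^(m+1 + (m+1)) = 1 := Even.neg_one_pow ⟨m+1, by ring⟩
      have s2 : (-1:ℝ)^(m+1 + m) = -1 := Odd.neg_one_pow ⟨m, by ring⟩
      rw [s1, s2, Pc_rec, show a + m + 1 = a + (m+1) by ring]
      ring

def Cy (m : ℕ) : Matrix (Fin (m+2)) (Fin (m+2)) ℝ :=
  Matrix.of fun i j => if i.val = j.val then fd i.val
    else if i.val + 1 = j.val ∨ j.val + 1 = i.val then -1
    else if (i.val = 0 ∧ j.val = m+1) ∨ (j.val = 0 ∧ i.val = m+1) then 1 else 0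

lemma detCy (m : ℕ) (hm : 1 ≤ m) :
    (Cy m).det = fd (m+1) * Pc 0 (m+1) - Pc 0 m - Pc 1 m + 2 := by
  have hTm0 : ∀ M : Matrix (Fin (m+1)) (Fin (m+1)) ℝ, M = Tm 0 (m+1) → M.det = Pc 0 (m+1) :=
    fun M h => h ▸ detT (m+1) 0
  rw [Matrix.det_succ_row (Cy m) (Fin.last (m+1))]
  have hne1 : (0 : Fin (m+2)) ∉ ({(Fin.last m).castSucc, Fin.last (m+1)} : Finset (Fin (m+2))) := by
    simp only [Finset.mem_insert, Finset.mem_singleton, Fin.ext_iff, Fin.val_zero,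
      Fin.coe_castSucc, Fin.val_last]
    omega
  have hne2 : (Fin.last m).castSucc ∉ ({Fin.last (m+1)} : Finset (Fin (m+2))) := by
    simp [Fin.ext_iff]
  have hz : ∀ x ∈ (Finset.univ : Finset (Fin (m+2))),
      x ∉ ({(0 : Fin (m+2)), (Fin.last m).castSucc, Fin.last (m+1)} : Finset (Fin (m+2))) →
      (-1:ℝ)^((Fin.last (m+1) : ℕ) + (x:ℕ)) * Cy m (Fin.last (m+1)) x *
        ((Cy m).submatrix (Fin.last (m+1)).succAbove x.succAbove).det = 0 := by
    intro x _ hx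
    simp only [Finset.mem_insert, Finset.mem_singleton, Fin.ext_iff, Fin.val_zero,
      Fin.coe_castSucc, Fin.val_last, not_or] at hx
    have hxl := x.isLt
    have : Cy m (Fin.last (m+1)) x = 0 := by
      simp only [Cy, Matrix.of_apply, Fin.val_last]
      try simp only [lt_self_iff_false, if_false, if_true, and_self, and_true, true_and, or_true, true_or, or_false, false_or, and_false, false_and, Nat.zero_add, Nat.add_zero]
      split_ifs <;>
        (try simp only [false_or, or_false, false_and, and_false, true_and, and_true,
          or_true, true_or, not_false_iff, not_true] at *) <;>
        first | rfl | (exact absurd trivial ‹¬True›) | (exact ‹False›.elim) | (exfalso; omega) | (congr 1; omega)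
    rw [this, mul_zero, zero_mul]
  rw [← Finset.sum_subset (Finset.subset_univ _) hz]
  rw [Finset.sum_insert hne1, Finset.sum_insert hne2, Finset.sum_singleton]
  -- entries of the last row
  have eL : Cy m (Fin.last (m+1)) (Fin.last (m+1)) = fd (m+1) := by
    simp [Cy, Fin.val_last]
  have eM : Cy m (Fin.last (m+1)) ((Fin.last m).castSucc) = -1 := by
    simp only [Cy, Matrix.of_apply, Fin.val_last, Fin.coe_castSucc, or_true, if_true]
    try simp only [lt_self_iff_false, if_false, if_true, and_self, and_true, true_and, or_true, true_or, or_false, false_or, and_false, false_and, Nat.zero_add, Nat.add_zero]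
    split_ifs <;>
        (try simp only [false_or, or_false, false_and, and_false, true_and, and_true,
          or_true, true_or, not_false_iff, not_true] at *) <;>
        first | rfl | (exact absurd trivial ‹¬True›) | (exact ‹False›.elim) | (exfalso; omega) | (congr 1; omega)
  have e0 : Cy m (Fin.last (m+1)) (0 : Fin (m+2)) = 1 := by
    simp only [Cy, Matrix.of_apply, Fin.val_last, Fin.val_zero]
    try simp only [lt_self_iff_false, if_false, if_true, and_self, and_true, true_and, or_true, true_or, or_false, false_or, and_false, false_and, Nat.zero_add, Nat.add_zero]
    split_ifs <;>
        (try simp only [false_or, or_false, false_and, and_false, true_and, and_true,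
          or_true, true_or, not_false_iff, not_true] at *) <;>
        first | rfl | (exact absurd trivial ‹¬True›) | (exact ‹False›.elim) | (exfalso; omega) | (congr 1; omega)
  -- minor at (last,last): tridiagonal
  have Hll : ((Cy m).submatrix (Fin.last (m+1)).succAbove
      (Fin.last (m+1)).succAbove).det = Pc 0 (m+1) := by
    rw [Fin.succAbove_last]
    apply hTm0
    ext i j
    simp only [Matrix.submatrix_apply, Cy, Tm, Matrix.of_apply, Fin.coe_castSucc]
    have hi := i.isLt
    have hj := j.isLt
    try simp only [lt_self_iff_false, if_false, if_true, and_self, and_true, true_and, or_true, true_or, or_false, false_or, and_false, false_and, Nat.zero_add, Nat.add_zero]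
    split_ifs <;>
        (try simp only [false_or, or_false, false_and, and_false, true_and, and_true,
          or_true, true_or, not_false_iff, not_true] at *) <;>
        first | rfl | (exact absurd trivial ‹¬True›) | (exact ‹False›.elim) | (exfalso; omega) | (congr 1; omega)
  -- minor at (last, m)
  have Hjm : ((Cy m).submatrix (Fin.last (m+1)).succAbove
      ((Fin.last m).castSucc).succAbove).det = 1 - Pc 0 m := by
    rw [Fin.succAbove_last]
    rw [Matrix.det_succ_column _ (Fin.last m)]
    have col_ne : ∀ i : Fin (m+1), i ≠ 0 → i ≠ Fin.last m →
        (Cy m).submatrix Fin.castSucc ((Fin.last m).castSucc).succAbove i (Fin.last m) = 0 := by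
      intro i hi0 hil
      have h0 : (i:ℕ) ≠ 0 := fun h => hi0 (Fin.ext (by rw [h]; rfl))
      have h1 : (i:ℕ) ≠ m := fun h => hil (Fin.ext (by rw [h, Fin.val_last]))
      have hisl := i.isLt
      simp only [Matrix.submatrix_apply, Cy, Matrix.of_apply, Fin.succAbove,
        Fin.lt_def, Fin.coe_castSucc, Fin.val_last, apply_ite Fin.val, Fin.val_succ]
      try simp only [lt_self_iff_false, if_false, if_true, and_self, and_true, true_and, or_true, true_or, or_false, false_or, and_false, false_and, Nat.zero_add, Nat.add_zero]
      split_ifs <;>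
        (try simp only [false_or, or_false, false_and, and_false, true_and, and_true,
          or_true, true_or, not_false_iff, not_true] at *) <;>
        first | rfl | (exact absurd trivial ‹¬True›) | (exact ‹False›.elim) | (exfalso; omega) | (congr 1; omega)
    have hnel : (0 : Fin (m+1)) ≠ Fin.last m := by
      simp [Fin.ext_iff]; omega
    have hz2 : ∀ x ∈ (Finset.univ : Finset (Fin (m+1))),
        x ∉ ({(0 : Fin (m+1)), Fin.last m} : Finset (Fin (m+1))) →
        (-1:ℝ)^((x:ℕ) + ((Fin.last m : Fin (m+1)):ℕ)) *
          (Cy m).submatrix Fin.castSucc ((Fin.last m).castSucc).succAbove x (Fin.last m) *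
          (((Cy m).submatrix Fin.castSucc ((Fin.last m).castSucc).succAbove).submatrix
            x.succAbove (Fin.last m).succAbove).det = 0 := by
      intro x _ hx
      simp only [Finset.mem_insert, Finset.mem_singleton, not_or] at hx
      rw [col_ne x hx.1 hx.2, mul_zero, zero_mul]
    rw [← Finset.sum_subset (Finset.subset_univ _) hz2, Finset.sum_pair hnel]
    -- entry at (0, last): corner 1
    have c0 : (Cy m).submatrix Fin.castSucc ((Fin.last m).castSucc).succAbove
        (0 : Fin (m+1)) (Fin.last m) = 1 := by
      simp only [Matrix.submatrix_apply, Cy, Matrix.of_apply, Fin.succAbove,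
        Fin.lt_def, Fin.coe_castSucc, Fin.val_last, apply_ite Fin.val, Fin.val_succ,
        Fin.val_zero]
      try simp only [lt_self_iff_false, if_false, if_true, and_self, and_true, true_and, or_true, true_or, or_false, false_or, and_false, false_and, Nat.zero_add, Nat.add_zero]
      split_ifs <;>
        (try simp only [false_or, or_false, false_and, and_false, true_and, and_true,
          or_true, true_or, not_false_iff, not_true] at *) <;>
        first | rfl | (exact absurd trivial ‹¬True›) | (exact ‹False›.elim) | (exfalso; omega) | (congr 1; omega)
    have cl : (Cy m).submatrix Fin.castSucc ((Fin.last m).castSucc).succAbove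
        (Fin.last m) (Fin.last m) = -1 := by
      simp only [Matrix.submatrix_apply, Cy, Matrix.of_apply, Fin.succAbove,
        Fin.lt_def, Fin.coe_castSucc, Fin.val_last, apply_ite Fin.val, Fin.val_succ]
      try simp only [lt_self_iff_false, if_false, if_true, and_self, and_true, true_and, or_true, true_or, or_false, false_or, and_false, false_and, Nat.zero_add, Nat.add_zero]
      split_ifs <;>
        (try simp only [false_or, or_false, false_and, and_false, true_and, and_true,
          or_true, true_or, not_false_iff, not_true] at *) <;>
        first | rfl | (exact absurd trivial ‹¬True›) | (exact ‹False›.elim) | (exfalso; omega) | (congr 1; omega)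
    -- minor for i = 0 : upper triangular
    have U : (((Cy m).submatrix Fin.castSucc ((Fin.last m).castSucc).succAbove).submatrix
        (0 : Fin (m+1)).succAbove (Fin.last m).succAbove).det = (-1:ℝ)^m := by
      rw [Fin.succAbove_zero, Fin.succAbove_last]
      have ht : (((Cy m).submatrix Fin.castSucc ((Fin.last m).castSucc).succAbove).submatrix
          Fin.succ Fin.castSucc).BlockTriangular id := by
        intro i j hij
        have hij' : (j:ℕ) < (i:ℕ) := hij
        have hi := i.isLt
        have hj := j.isLt
        simp only [Matrix.submatrix_apply, Cy, Matrix.of_apply, Fin.succAbove,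
          Fin.lt_def, Fin.coe_castSucc, Fin.val_last, apply_ite Fin.val, Fin.val_succ]
        try simp only [lt_self_iff_false, if_false, if_true, and_self, and_true, true_and, or_true, true_or, or_false, false_or, and_false, false_and, Nat.zero_add, Nat.add_zero]
        split_ifs <;>
        (try simp only [false_or, or_false, false_and, and_false, true_and, and_true,
          or_true, true_or, not_false_iff, not_true] at *) <;>
        first | rfl | (exact absurd trivial ‹¬True›) | (exact ‹False›.elim) | (exfalso; omega) | (congr 1; omega)
      rw [Matrix.det_of_upperTriangular ht]
      have hd : ∀ i : Fin m, ((Cy m).submatrix Fin.castSucc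
          ((Fin.last m).castSucc).succAbove).submatrix Fin.succ Fin.castSucc i i = -1 := by
        intro i
        have hi := i.isLt
        simp only [Matrix.submatrix_apply, Cy, Matrix.of_apply, Fin.succAbove,
          Fin.lt_def, Fin.coe_castSucc, Fin.val_last, apply_ite Fin.val, Fin.val_succ]
        try simp only [lt_self_iff_false, if_false, if_true, and_self, and_true, true_and, or_true, true_or, or_false, false_or, and_false, false_and, Nat.zero_add, Nat.add_zero]
        split_ifs <;>
        (try simp only [false_or, or_false, false_and, and_false, true_and, and_true,
          or_true, true_or, not_false_iff, not_true] at *) <;>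
        first | rfl | (exact absurd trivial ‹¬True›) | (exact ‹False›.elim) | (exfalso; omega) | (congr 1; omega)
      rw [Finset.prod_congr rfl (fun i _ => hd i), Finset.prod_const, Finset.card_univ,
        Fintype.card_fin]
    -- minor for i = last : tridiagonal Tm 0 m
    have L : (((Cy m).submatrix Fin.castSucc ((Fin.last m).castSucc).succAbove).submatrix
        (Fin.last m).succAbove (Fin.last m).succAbove).det = Pc 0 m := by
      rw [Fin.succAbove_last]
      have : ((Cy m).submatrix Fin.castSucc ((Fin.last m).castSucc).succAbove).submatrix
          Fin.castSucc Fin.castSucc = Tm 0 m := by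
        ext i j
        have hi := i.isLt
        have hj := j.isLt
        simp only [Matrix.submatrix_apply, Cy, Tm, Matrix.of_apply, Fin.succAbove,
          Fin.lt_def, Fin.coe_castSucc, Fin.val_last, apply_ite Fin.val, Fin.val_succ]
        try simp only [lt_self_iff_false, if_false, if_true, and_self, and_true, true_and, or_true, true_or, or_false, false_or, and_false, false_and, Nat.zero_add, Nat.add_zero]
        split_ifs <;>
        (try simp only [false_or, or_false, false_and, and_false, true_and, and_true,
          or_true, true_or, not_false_iff, not_true] at *) <;>
        first | rfl | (exact absurd trivial ‹¬True›) | (exact ‹False›.elim) | (exfalso; omega) | (congr 1; omega)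
      rw [this, detT m 0]
    rw [c0, cl, U, L, Fin.val_last, Fin.val_zero]
    have s1 : (-1:ℝ)^(0 + m) = (-1:ℝ)^m := by rw [Nat.zero_add]
    have s2 : (-1:ℝ)^(m + m) = 1 := Even.neg_one_pow ⟨m, by ring⟩
    have s3 : (-1:ℝ)^m * (-1:ℝ)^m = 1 := by rw [← pow_add]; exact Even.neg_one_pow ⟨m, by ring⟩
    rw [s1, s2]
    linear_combination s3
  -- minor at (last, 0)
  have Hj0 : ((Cy m).submatrix (Fin.last (m+1)).succAbove
      (0 : Fin (m+2)).succAbove).det = (-1:ℝ)^(m+1) * (1 - Pc 1 m) := by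
    rw [Fin.succAbove_last, Fin.succAbove_zero]
    rw [Matrix.det_succ_row_zero]
    have row_ne : ∀ j : Fin (m+1), j ≠ 0 → j ≠ Fin.last m →
        (Cy m).submatrix Fin.castSucc Fin.succ (0 : Fin (m+1)) j = 0 := by
      intro j hj0 hjl
      have h0 : (j:ℕ) ≠ 0 := fun h => hj0 (Fin.ext (by rw [h]; rfl))
      have h1 : (j:ℕ) ≠ m := fun h => hjl (Fin.ext (by rw [h, Fin.val_last]))
      have hjsl := j.isLt
      simp only [Matrix.submatrix_apply, Cy, Matrix.of_apply, Fin.coe_castSucc,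
        Fin.val_succ, Fin.val_zero]
      try simp only [lt_self_iff_false, if_false, if_true, and_self, and_true, true_and, or_true, true_or, or_false, false_or, and_false, false_and, Nat.zero_add, Nat.add_zero]
      split_ifs <;>
        (try simp only [false_or, or_false, false_and, and_false, true_and, and_true,
          or_true, true_or, not_false_iff, not_true] at *) <;>
        first | rfl | (exact absurd trivial ‹¬True›) | (exact ‹False›.elim) | (exfalso; omega) | (congr 1; omega)
    have hnel : (0 : Fin (m+1)) ≠ Fin.last m := by
      simp [Fin.ext_iff]; omega
    have hz3 : ∀ x ∈ (Finset.univ : Finset (Fin (m+1))),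
        x ∉ ({(0 : Fin (m+1)), Fin.last m} : Finset (Fin (m+1))) →
        (-1:ℝ)^((x:ℕ)) * (Cy m).submatrix Fin.castSucc Fin.succ (0 : Fin (m+1)) x *
          (((Cy m).submatrix Fin.castSucc Fin.succ).submatrix Fin.succ x.succAbove).det
          = 0 := by
      intro x _ hx
      simp only [Finset.mem_insert, Finset.mem_singleton, not_or] at hx
      rw [row_ne x hx.1 hx.2, mul_zero, zero_mul]
    rw [← Finset.sum_subset (Finset.subset_univ _) hz3, Finset.sum_pair hnel]
    have r0 : (Cy m).submatrix Fin.castSucc Fin.succ (0 : Fin (m+1)) (0 : Fin (m+1)) = -1 := by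
      simp only [Matrix.submatrix_apply, Cy, Matrix.of_apply, Fin.coe_castSucc,
        Fin.val_succ, Fin.val_zero]
      try simp only [lt_self_iff_false, if_false, if_true, and_self, and_true, true_and, or_true, true_or, or_false, false_or, and_false, false_and, Nat.zero_add, Nat.add_zero]
      split_ifs <;>
        (try simp only [false_or, or_false, false_and, and_false, true_and, and_true,
          or_true, true_or, not_false_iff, not_true] at *) <;>
        first | rfl | (exact absurd trivial ‹¬True›) | (exact ‹False›.elim) | (exfalso; omega) | (congr 1; omega)
    have rl : (Cy m).submatrix Fin.castSucc Fin.succ (0 : Fin (m+1)) (Fin.last m) = 1 := by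
      simp only [Matrix.submatrix_apply, Cy, Matrix.of_apply, Fin.coe_castSucc,
        Fin.val_succ, Fin.val_zero, Fin.val_last]
      try simp only [lt_self_iff_false, if_false, if_true, and_self, and_true, true_and, or_true, true_or, or_false, false_or, and_false, false_and, Nat.zero_add, Nat.add_zero]
      split_ifs <;>
        (try simp only [false_or, or_false, false_and, and_false, true_and, and_true,
          or_true, true_or, not_false_iff, not_true] at *) <;>
        first | rfl | (exact absurd trivial ‹¬True›) | (exact ‹False›.elim) | (exfalso; omega) | (congr 1; omega)
    -- minor for j = 0 : lower triangular
    have LT : (((Cy m).submatrix Fin.castSucc Fin.succ).submatrix Fin.succ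
        (0 : Fin (m+1)).succAbove).det = (-1:ℝ)^m := by
      rw [Fin.succAbove_zero]
      have ht : ((((Cy m).submatrix Fin.castSucc Fin.succ).submatrix Fin.succ
          Fin.succ)).BlockTriangular OrderDual.toDual := by
        intro i j hij
        have hij' : (i:ℕ) < (j:ℕ) := hij
        have hi := i.isLt
        have hj := j.isLt
        simp only [Matrix.submatrix_apply, Cy, Matrix.of_apply, Fin.coe_castSucc,
          Fin.val_succ]
        try simp only [lt_self_iff_false, if_false, if_true, and_self, and_true, true_and, or_true, true_or, or_false, false_or, and_false, false_and, Nat.zero_add, Nat.add_zero]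
        split_ifs <;>
        (try simp only [false_or, or_false, false_and, and_false, true_and, and_true,
          or_true, true_or, not_false_iff, not_true] at *) <;>
        first | rfl | (exact absurd trivial ‹¬True›) | (exact ‹False›.elim) | (exfalso; omega) | (congr 1; omega)
      rw [Matrix.det_of_lowerTriangular _ ht]
      have hd : ∀ i : Fin m, ((Cy m).submatrix Fin.castSucc Fin.succ).submatrix
          Fin.succ Fin.succ i i = -1 := by
        intro i
        have hi := i.isLt
        simp only [Matrix.submatrix_apply, Cy, Matrix.of_apply, Fin.coe_castSucc,
          Fin.val_succ]
        try simp only [lt_self_iff_false, if_false, if_true, and_self, and_true, true_and, or_true, true_or, or_false, false_or, and_false, false_and, Nat.zero_add, Nat.add_zero]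
        split_ifs <;>
        (try simp only [false_or, or_false, false_and, and_false, true_and, and_true,
          or_true, true_or, not_false_iff, not_true] at *) <;>
        first | rfl | (exact absurd trivial ‹¬True›) | (exact ‹False›.elim) | (exfalso; omega) | (congr 1; omega)
      rw [Finset.prod_congr rfl (fun i _ => hd i), Finset.prod_const, Finset.card_univ,
        Fintype.card_fin]
    -- minor for j = last : tridiagonal Tm 1 m
    have TR : (((Cy m).submatrix Fin.castSucc Fin.succ).submatrix Fin.succ
        (Fin.last m).succAbove).det = Pc 1 m := by
      rw [Fin.succAbove_last]
      have : ((Cy m).submatrix Fin.castSucc Fin.succ).submatrix Fin.succ Fin.castSucc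
          = Tm 1 m := by
        ext i j
        have hi := i.isLt
        have hj := j.isLt
        simp only [Matrix.submatrix_apply, Cy, Tm, Matrix.of_apply, Fin.coe_castSucc,
          Fin.val_succ]
        try simp only [lt_self_iff_false, if_false, if_true, and_self, and_true, true_and, or_true, true_or, or_false, false_or, and_false, false_and, Nat.zero_add, Nat.add_zero]
        split_ifs <;>
        (try simp only [false_or, or_false, false_and, and_false, true_and, and_true,
          or_true, true_or, not_false_iff, not_true] at *) <;>
        first | rfl | (exact absurd trivial ‹¬True›) | (exact ‹False›.elim) | (exfalso; omega) | (congr 1; omega)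
      rw [this, detT m 1]
    rw [r0, rl, LT, TR, Fin.val_last, Fin.val_zero]
    have hp : (-1:ℝ)^(m+1) = -(-1:ℝ)^m := by rw [pow_succ]; ring
    rw [hp]; ring
  rw [eL, eM, e0, Hll, Hjm, Hj0, Fin.val_last, Fin.coe_castSucc, Fin.val_last, Fin.val_zero]
  have s1 : (-1:ℝ)^(m+1 + (m+1)) = 1 := Even.neg_one_pow ⟨m+1, by ring⟩
  have s2 : (-1:ℝ)^(m+1 + m) = -1 := Odd.neg_one_pow ⟨m, by ring⟩
  have s3 : (-1:ℝ)^(m+1) * (-1:ℝ)^(m+1) = 1 := by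
    rw [← pow_add]; exact Even.neg_one_pow ⟨m+1, by ring⟩
  rw [s1, s2, Nat.add_zero]
  linear_combination (1 - Pc 1 m) * s3

theorem stmt_3 (n : ℕ) (hn : 1 ≤ n) :
    (LS n).det = mu ^ n + nu ^ n + 2 := by
  obtain ⟨k, rfl⟩ : ∃ k, n = k + 1 := ⟨n - 1, by omega⟩
  have hsz : 4*k+2+2 = 4*(k+1) := by ring
  have hmat : Cy (4*k+2) = (LS (k+1)).submatrix (finCongr hsz) (finCongr hsz) := by
    ext i j
    have hi := i.isLt
    have hj := j.isLt
    simp only [Cy, LS, Matrix.submatrix_apply, Matrix.of_apply, finCongr_apply,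
      Fin.coe_cast, fd]
    split_ifs <;> first | rfl | (exfalso; omega)
  have hdet : (Cy (4*k+2)).det = (LS (k+1)).det := by
    rw [hmat, Matrix.det_submatrix_equiv_self]
  rw [← hdet, detCy (4*k+2) (by omega)]
  rw [show 4*k+2+1 = 4*k+3 by ring,
    fd_eq_four (show (4*k+3) % 4 = 0 ∨ (4*k+3) % 4 = 3 by omega)]
  have hS := Smain k
  linarith
end

section
/- Let n ≥ 1 and let L_S(n) be the 4n×4n real symmetric matrix with diagonal entries 4 at positions j ≡ 0 or 1 (mod 4) and 2 at positions j ≡ 2 or 3 (mod 4), entries −1 on the sub- and super-diagonal, corner entries (L_S)_{1,4n} = (L_S)_{4n,1} = +1, and all other entries 0. For 1 ≤ j ≤ 4n let L_S[j] denote the (4n−1)×(4n−1) matrix obtained from L_S(n) by deleting the j-th row and j-th column. Let μ = 15 + 4√14 and ν = 15 − 4√14. Then for every j with j ≡ 0 or 1 (mod 4), det L_S[j] = (5√14/56)(μ^n − ν^n). -/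
/-- Delete the row and column through position `j` of an `(m+1)×(m+1)` matrix. -/
def deleteRC {m : ℕ} (M : Matrix (Fin (m + 1)) (Fin (m + 1)) ℝ) (j : Fin (m + 1)) :
    Matrix (Fin m) (Fin m) ℝ :=
  M.submatrix j.succAbove j.succAbove

/-! ### Auxiliary: tridiagonal matrices and continuants -/

def tri (d : ℕ → ℝ) (m : ℕ) : Matrix (Fin m) (Fin m) ℝ :=
  Matrix.of fun i j => if i.val = j.val then d i.val
    else if i.val + 1 = j.val ∨ j.val + 1 = i.val then -1 else 0

lemma tri_apply (d : ℕ → ℝ) (m : ℕ) (i j : Fin m) :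
    tri d m i j = if (i:ℕ) = (j:ℕ) then d i
    else if (i:ℕ) + 1 = (j:ℕ) ∨ (j:ℕ) + 1 = (i:ℕ) then -1 else 0 := rfl

lemma succAbove_val {m : ℕ} (p : Fin (m+1)) (i : Fin m) :
    ((p.succAbove i) : ℕ) = if (i:ℕ) < (p:ℕ) then (i:ℕ) else (i:ℕ)+1 := by
  rw [Fin.succAbove, apply_ite Fin.val]
  simp [Fin.lt_def]

def cont (d : ℕ → ℝ) : ℕ → ℝ
  | 0 => 1
  | 1 => d 0
  | (m+2) => d (m+1) * cont d (m+1) - cont d m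

lemma cont_add2 (d : ℕ → ℝ) (m : ℕ) :
    cont d (m+2) = d (m+1) * cont d (m+1) - cont d m := rfl

theorem det_tri (d : ℕ → ℝ) : ∀ m, (tri d m).det = cont d m := by
  intro m
  induction m using Nat.twoStepInduction with
  | zero => simp [cont, Matrix.det_fin_zero]
  | one => simp [cont, Matrix.det_fin_one, tri]
  | more m ih ih1 =>
    have hvlast : ((Fin.last (m+1) : Fin (m+2)) : ℕ) = m+1 := rfl
    rw [Matrix.det_succ_row (tri d (m+2)) (Fin.last (m+1))]
    rw [Fin.sum_univ_castSucc, Fin.sum_univ_castSucc]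
    have hz : ∀ i : Fin m,
        ((-1 : ℝ) ^ ((Fin.last (m+1) : ℕ) + ((i.castSucc.castSucc : Fin (m+2)) : ℕ)) *
          tri d (m+2) (Fin.last (m+1)) i.castSucc.castSucc *
          ((tri d (m+2)).submatrix (Fin.last (m+1)).succAbove
            (i.castSucc.castSucc).succAbove).det) = 0 := by
      intro i
      have hi : (i : ℕ) < m := i.isLt
      have h0 : tri d (m+2) (Fin.last (m+1)) i.castSucc.castSucc = 0 := by
        rw [tri_apply, hvlast]
        have hv : ((i.castSucc.castSucc : Fin (m+2)) : ℕ) = (i:ℕ) := rfl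
        rw [hv]
        split_ifs <;> first | rfl | (exfalso; omega)
      rw [h0]; ring
    rw [Finset.sum_eq_zero (fun i _ => hz i), zero_add]
    have hminor2 : (tri d (m+2)).submatrix (Fin.last (m+1)).succAbove
        (Fin.last (m+1)).succAbove = tri d (m+1) := by
      ext i k
      rw [Matrix.submatrix_apply, tri_apply, tri_apply]
      have e1 : (((Fin.last (m+1)).succAbove i : Fin (m+2)) : ℕ) = (i:ℕ) := by
        rw [succAbove_val]; have := i.isLt; rw [if_pos]; rwa [hvlast]
      have e2 : (((Fin.last (m+1)).succAbove k : Fin (m+2)) : ℕ) = (k:ℕ) := by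
        rw [succAbove_val]; have := k.isLt; rw [if_pos]; rwa [hvlast]
      rw [e1, e2]
    have hentry2 : tri d (m+2) (Fin.last (m+1)) (Fin.last (m+1)) = d (m+1) := by
      rw [tri_apply, hvlast]; simp
    set c : Fin (m+2) := (Fin.last m).castSucc with hc
    have hvc : (c : ℕ) = m := rfl
    have hentry1 : tri d (m+2) (Fin.last (m+1)) c = -1 := by
      rw [tri_apply, hvlast, hvc]
      split_ifs <;> first | rfl | (exfalso; omega)
    set N := (tri d (m+2)).submatrix (Fin.last (m+1)).succAbove c.succAbove with hN
    have hNval : ∀ (i : Fin (m+1)) (k : Fin (m+1)),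
        N i k = tri d (m+2) ((Fin.last (m+1)).succAbove i) (c.succAbove k) := fun i k => rfl
    have hrowval : ∀ i : Fin (m+1), (((Fin.last (m+1)).succAbove i : Fin (m+2)) : ℕ) = (i:ℕ) := by
      intro i; rw [succAbove_val]; have := i.isLt; rw [if_pos]; rwa [hvlast]
    have hcolval : ∀ k : Fin (m+1),
        ((c.succAbove k : Fin (m+2)) : ℕ) = if (k:ℕ) < m then (k:ℕ) else (k:ℕ)+1 := by
      intro k; rw [succAbove_val, hvc]
    have hNdet : N.det = - (tri d m).det := by
      rw [Matrix.det_succ_column N (Fin.last m), Fin.sum_univ_castSucc]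
      have hz2 : ∀ i : Fin m,
          ((-1 : ℝ) ^ (((i.castSucc : Fin (m+1)) : ℕ) + ((Fin.last m : Fin (m+1)) : ℕ)) *
            N i.castSucc (Fin.last m) *
            (N.submatrix (i.castSucc).succAbove (Fin.last m).succAbove).det) = 0 := by
        intro i
        have hi : (i : ℕ) < m := i.isLt
        have h0 : N i.castSucc (Fin.last m) = 0 := by
          rw [hNval, tri_apply, hrowval, hcolval]
          have e1 : ((i.castSucc : Fin (m+1)) : ℕ) = (i:ℕ) := rfl
          have e2 : ((Fin.last m : Fin (m+1)) : ℕ) = m := rfl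
          rw [e1, e2]
          split_ifs <;> first | rfl | (exfalso; omega)
        rw [h0]; ring
      rw [Finset.sum_eq_zero (fun i _ => hz2 i), zero_add]
      have hNentry : N (Fin.last m) (Fin.last m) = -1 := by
        rw [hNval, tri_apply, hrowval, hcolval]
        have : ((Fin.last m : Fin (m+1)) : ℕ) = m := rfl
        rw [this]
        split_ifs <;> first | rfl | (exfalso; omega)
      have hNminor : N.submatrix (Fin.last m).succAbove (Fin.last m).succAbove = tri d m := by
        ext i k
        rw [Matrix.submatrix_apply, hNval, tri_apply, hrowval, hcolval, tri_apply]
        have hi := i.isLt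
        have hk := k.isLt
        have e1 : (((Fin.last m).succAbove i : Fin (m+1)) : ℕ) = (i:ℕ) := by
          rw [succAbove_val]; rw [if_pos]; exact hi
        have e2 : (((Fin.last m).succAbove k : Fin (m+1)) : ℕ) = (k:ℕ) := by
          rw [succAbove_val]; rw [if_pos]; exact hk
        rw [e1, e2, if_pos hk]
      rw [hNentry, hNminor, ih]
      have hv : ((Fin.last m : Fin (m+1)) : ℕ) = m := rfl
      rw [hv]
      have hsgn : ((-1:ℝ))^(m+m) = 1 := Even.neg_one_pow ⟨m, by ring⟩
      rw [hsgn]; ring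
    rw [hNdet, hminor2, hentry2, hentry1, ih1, ih, hvlast, hvc]
    have hs1 : ((-1:ℝ))^((m+1)+m) = -1 := Odd.neg_one_pow ⟨m, by ring⟩
    have hs2 : ((-1:ℝ))^((m+1)+(m+1)) = 1 := Even.neg_one_pow ⟨m+1, by ring⟩
    rw [hs1, hs2]
    rw [show cont d (m+2) = d (m+1) * cont d (m+1) - cont d m from rfl]
    ring

def dA : ℕ → ℝ := fun k => if (k+2) % 4 ≤ 1 then 4 else 2
def dB : ℕ → ℝ := fun k => if (k+1) % 4 ≤ 1 then 4 else 2

lemma hs14 : Real.sqrt 14 ^ 2 = 14 := Real.sq_sqrt (by norm_num)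

lemma hmu : mu * mu = 30 * mu - 1 := by
  simp only [mu]; linear_combination (16:ℝ) * hs14

lemma hnu : nu * nu = 30 * nu - 1 := by
  simp only [nu]; linear_combination (16:ℝ) * hs14

lemma cont3 (d : ℕ → ℝ) : cont d 3 = d 2 * (d 1 * d 0 - 1) - d 0 := rfl
lemma cont4 (d : ℕ → ℝ) : cont d 4 = d 3 * (d 2 * (d 1 * d 0 - 1) - d 0) - (d 1 * d 0 - 1) := rfl

lemma contA : ∀ k : ℕ,
    cont dA (4*k+3) = (5 * Real.sqrt 14 / 56) * (mu^(k+1) - nu^(k+1)) ∧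
    cont dA (4*k+4) = (5 * Real.sqrt 14 / 56 / 10) * ((mu+7)*mu^(k+1) - (nu+7)*nu^(k+1)) := by
  intro k
  induction k with
  | zero =>
    constructor
    · show cont dA 3 = _
      rw [cont3]
      simp only [dA, mu, nu]
      norm_num
      linear_combination (-5/7 : ℝ) * hs14
    · show cont dA 4 = _
      rw [cont4]
      simp only [dA, mu, nu]
      norm_num
      linear_combination (-37/14 : ℝ) * hs14
  | succ k ih =>
    obtain ⟨ha, hb⟩ := ih
    have d4 : dA (4*k+4) = 2 := by
      have h : (4*k+4+2) % 4 = 2 := by omega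
      simp [dA, h]
    have d5 : dA (4*k+5) = 2 := by
      have h : (4*k+5+2) % 4 = 3 := by omega
      simp [dA, h]
    have d6 : dA (4*k+6) = 4 := by
      have h : (4*k+6+2) % 4 = 0 := by omega
      simp [dA, h]
    have d7 : dA (4*k+7) = 4 := by
      have h : (4*k+7+2) % 4 = 1 := by omega
      simp [dA, h]
    have h5 : cont dA (4*k+5) = 2 * cont dA (4*k+4) - cont dA (4*k+3) := by
      rw [show 4*k+5 = (4*k+3)+2 from by ring, cont_add2, show 4*k+3+1 = 4*k+4 from by ring, d4]
    have h6 : cont dA (4*k+6) = 2 * cont dA (4*k+5) - cont dA (4*k+4) := by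
      rw [show 4*k+6 = (4*k+4)+2 from by ring, cont_add2, show 4*k+4+1 = 4*k+5 from by ring, d5]
    have h7 : cont dA (4*k+7) = 4 * cont dA (4*k+6) - cont dA (4*k+5) := by
      rw [show 4*k+7 = (4*k+5)+2 from by ring, cont_add2, show 4*k+5+1 = 4*k+6 from by ring, d6]
    have h8 : cont dA (4*k+8) = 4 * cont dA (4*k+7) - cont dA (4*k+6) := by
      rw [show 4*k+8 = (4*k+6)+2 from by ring, cont_add2, show 4*k+6+1 = 4*k+7 from by ring, d7]
    constructor
    · rw [show 4*(k+1)+3 = 4*k+7 from by ring, h7, h6, h5, ha, hb,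
        show k+1+1 = k+2 from rfl, pow_succ mu (k+1), pow_succ nu (k+1)]
      ring
    · rw [show 4*(k+1)+4 = 4*k+8 from by ring, h8, h7, h6, h5, ha, hb,
        show k+1+1 = k+2 from rfl, pow_succ mu (k+1), pow_succ nu (k+1)]
      linear_combination (-(5*Real.sqrt 14/56/10) * mu^(k+1)) * hmu + ((5*Real.sqrt 14/56/10) * nu^(k+1)) * hnu

lemma contB : ∀ k : ℕ,
    cont dB (4*k+3) = (5 * Real.sqrt 14 / 56) * (mu^(k+1) - nu^(k+1)) ∧
    cont dB (4*k+4) = (5 * Real.sqrt 14 / 56 / 10) * ((mu+3)*mu^(k+1) - (nu+3)*nu^(k+1)) := by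
  intro k
  induction k with
  | zero =>
    constructor
    · show cont dB 3 = _
      rw [cont3]
      simp only [dB, mu, nu]
      norm_num
      linear_combination (-5/7 : ℝ) * hs14
    · show cont dB 4 = _
      rw [cont4]
      simp only [dB, mu, nu]
      norm_num
      linear_combination (-33/14 : ℝ) * hs14
  | succ k ih =>
    obtain ⟨ha, hb⟩ := ih
    have d4 : dB (4*k+4) = 4 := by
      have h : (4*k+4+1) % 4 = 1 := by omega
      simp [dB, h]
    have d5 : dB (4*k+5) = 2 := by
      have h : (4*k+5+1) % 4 = 2 := by omega
      simp [dB, h]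
    have d6 : dB (4*k+6) = 2 := by
      have h : (4*k+6+1) % 4 = 3 := by omega
      simp [dB, h]
    have d7 : dB (4*k+7) = 4 := by
      have h : (4*k+7+1) % 4 = 0 := by omega
      simp [dB, h]
    have h5 : cont dB (4*k+5) = 4 * cont dB (4*k+4) - cont dB (4*k+3) := by
      rw [show 4*k+5 = (4*k+3)+2 from by ring, cont_add2, show 4*k+3+1 = 4*k+4 from by ring, d4]
    have h6 : cont dB (4*k+6) = 2 * cont dB (4*k+5) - cont dB (4*k+4) := by
      rw [show 4*k+6 = (4*k+4)+2 from by ring, cont_add2, show 4*k+4+1 = 4*k+5 from by ring, d5]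
    have h7 : cont dB (4*k+7) = 2 * cont dB (4*k+6) - cont dB (4*k+5) := by
      rw [show 4*k+7 = (4*k+5)+2 from by ring, cont_add2, show 4*k+5+1 = 4*k+6 from by ring, d6]
    have h8 : cont dB (4*k+8) = 4 * cont dB (4*k+7) - cont dB (4*k+6) := by
      rw [show 4*k+8 = (4*k+6)+2 from by ring, cont_add2, show 4*k+6+1 = 4*k+7 from by ring, d7]
    constructor
    · rw [show 4*(k+1)+3 = 4*k+7 from by ring, h7, h6, h5, ha, hb,
        show k+1+1 = k+2 from rfl, pow_succ mu (k+1), pow_succ nu (k+1)]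
      ring
    · rw [show 4*(k+1)+4 = 4*k+8 from by ring, h8, h7, h6, h5, ha, hb,
        show k+1+1 = k+2 from rfl, pow_succ mu (k+1), pow_succ nu (k+1)]
      linear_combination (-(5*Real.sqrt 14/56/10) * mu^(k+1)) * hmu + ((5*Real.sqrt 14/56/10) * nu^(k+1)) * hnu

set_option maxHeartbeats 2000000 in
theorem stmt_5 (n : ℕ) (hn : 1 ≤ n) (j : Fin (4 * n))
    (hj : (j.val + 1) % 4 = 0 ∨ (j.val + 1) % 4 = 1) :
    (deleteRC
        ((LS n).reindex (finCongr (by omega : 4 * n = (4 * n - 1) + 1))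
          (finCongr (by omega : 4 * n = (4 * n - 1) + 1)))
        (Fin.cast (by omega) j)).det
      = (5 * Real.sqrt 14 / 56) * (mu ^ n - nu ^ n) := by
  set A := (deleteRC
        ((LS n).reindex (finCongr (by omega : 4 * n = (4 * n - 1) + 1))
          (finCongr (by omega : 4 * n = (4 * n - 1) + 1)))
        (Fin.cast (by omega) j)) with hAdef
  have hA : ∀ p q : Fin (4*n-1), A p q =
      (if (if (p:ℕ) < (j:ℕ) then (p:ℕ) else (p:ℕ)+1) = (if (q:ℕ) < (j:ℕ) then (q:ℕ) else (q:ℕ)+1) then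
        (if ((if (p:ℕ) < (j:ℕ) then (p:ℕ) else (p:ℕ)+1) + 1) % 4 = 0 ∨ ((if (p:ℕ) < (j:ℕ) then (p:ℕ) else (p:ℕ)+1) + 1) % 4 = 1 then 4 else 2)
      else if (if (p:ℕ) < (j:ℕ) then (p:ℕ) else (p:ℕ)+1) + 1 = (if (q:ℕ) < (j:ℕ) then (q:ℕ) else (q:ℕ)+1) ∨ (if (q:ℕ) < (j:ℕ) then (q:ℕ) else (q:ℕ)+1) + 1 = (if (p:ℕ) < (j:ℕ) then (p:ℕ) else (p:ℕ)+1) then -1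
      else if ((if (p:ℕ) < (j:ℕ) then (p:ℕ) else (p:ℕ)+1) = 0 ∧ (if (q:ℕ) < (j:ℕ) then (q:ℕ) else (q:ℕ)+1) = 4 * n - 1) ∨ ((if (q:ℕ) < (j:ℕ) then (q:ℕ) else (q:ℕ)+1) = 0 ∧ (if (p:ℕ) < (j:ℕ) then (p:ℕ) else (p:ℕ)+1) = 4 * n - 1) then 1
      else 0) := by
    intro p q
    have e1 := succAbove_val (Fin.cast (by omega : 4*n = (4*n-1)+1) j) p
    have e2 := succAbove_val (Fin.cast (by omega : 4*n = (4*n-1)+1) j) q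
    have hjc : ((Fin.cast (by omega : 4*n = (4*n-1)+1) j : Fin ((4*n-1)+1)) : ℕ) = (j:ℕ) := rfl
    rw [hjc] at e1 e2
    show LS n _ _ = _
    show (if _ then _ else _) = _
    simp only [finCongr_symm, finCongr_apply, Fin.coe_cast]
    simp only [e1, e2]
  clear_value A
  rcases Nat.lt_or_ge (j:ℕ) (4*n-1) with hlt | hge
  · -- j < 4n-1: rotate and conjugate by signs
    haveI : NeZero (4*n-1) := ⟨by omega⟩
    set c : Fin (4*n-1) := ⟨(j:ℕ), hlt⟩ with hc
    set e : Fin (4*n-1) ≃ Fin (4*n-1) := Equiv.addRight c with he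
    have hev : ∀ p : Fin (4*n-1), ((e p : Fin (4*n-1)) : ℕ) =
        if (p:ℕ) + (j:ℕ) < 4*n-1 then (p:ℕ)+(j:ℕ) else (p:ℕ)+(j:ℕ)-(4*n-1) := by
      intro p
      have h1 : (e p) = p + c := rfl
      have hcv : (c:ℕ) = (j:ℕ) := rfl
      rw [h1, Fin.val_add, hcv]
      rcases Nat.lt_or_ge ((p:ℕ)+(j:ℕ)) (4*n-1) with h | h
      · rw [Nat.mod_eq_of_lt h, if_pos h]
      · rw [if_neg (by omega), Nat.mod_eq_sub_mod h,
          Nat.mod_eq_of_lt (by have := p.isLt; omega)]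
    set σ : Fin (4*n-1) → ℝ := fun p => if (p:ℕ) + (j:ℕ) < 4*n-1 then 1 else -1 with hσ
    set dj : ℕ → ℝ := fun t => if ((j:ℕ)+t+2) % 4 ≤ 1 then 4 else 2 with hdj
    have key : A.submatrix e e = Matrix.diagonal σ * tri dj (4*n-1) * Matrix.diagonal σ := by
      ext p q
      have hp := p.isLt
      have hq := q.isLt
      rw [Matrix.submatrix_apply, hA (e p) (e q), Matrix.mul_diagonal, Matrix.diagonal_mul,
        tri_apply]
      simp only [hσ, hdj]
      rw [hev p, hev q]
      split_ifs <;> first | (exfalso; omega) | (exact (‹False ∧ _ ∨ False ∧ _›.elim (fun h => h.1.elim) (fun h => h.1.elim))) | norm_num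
    have hdet1 : A.det = (A.submatrix e e).det := (Matrix.det_submatrix_equiv_self e A).symm
    rw [hdet1, key, Matrix.det_mul, Matrix.det_mul, Matrix.det_diagonal, det_tri]
    have hσσ : (∏ i, σ i) * (∏ i, σ i) = 1 := by
      rw [← Finset.prod_mul_distrib]
      apply Finset.prod_eq_one
      intro i _
      simp only [hσ]
      split_ifs <;> norm_num
    have hre : (∏ i, σ i) * cont dj (4*n-1) * (∏ i, σ i)
        = ((∏ i, σ i) * (∏ i, σ i)) * cont dj (4*n-1) := by ring
    rw [hre, hσσ, one_mul]
    obtain ⟨k, rfl⟩ : ∃ k, n = k+1 := ⟨n-1, by omega⟩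
    have hmod : (j:ℕ) % 4 = 3 ∨ (j:ℕ) % 4 = 0 := by omega
    rcases hmod with h3 | h0
    · have hfe : dj = dB := by
        funext t
        simp only [hdj, dB]
        have hh : ((j:ℕ)+t+2) % 4 = (t+1) % 4 := by omega
        rw [hh]
      rw [hfe, show 4*(k+1)-1 = 4*k+3 from by omega, (contB k).1]
    · have hfe : dj = dA := by
        funext t
        simp only [hdj, dA]
        have hh : ((j:ℕ)+t+2) % 4 = (t+2) % 4 := by omega
        rw [hh]
      rw [hfe, show 4*(k+1)-1 = 4*k+3 from by omega, (contA k).1]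
  · -- j = 4n-1
    have hje : (j:ℕ) = 4*n-1 := by have := j.isLt; omega
    have hAt : A = tri dB (4*n-1) := by
      ext p q
      have hp := p.isLt
      have hq := q.isLt
      rw [hA, tri_apply]
      rw [if_pos (by omega : (p:ℕ) < (j:ℕ)), if_pos (by omega : (q:ℕ) < (j:ℕ))]
      simp only [dB]
      split_ifs <;> first | rfl | (exfalso; omega)
    rw [hAt, det_tri]
    obtain ⟨k, rfl⟩ : ∃ k, n = k+1 := ⟨n-1, by omega⟩
    rw [show 4*(k+1)-1 = 4*k+3 from by omega, (contB k).1]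
end
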